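/- Let P_n be the normalized Hermite polynomials and g_n'(x) the derivative of g_n(x) = ∑_{k=0}^n P_k(x)². Then |g_n'(x)| ≤ 4|x| g_n(x) for all n ≥ 1 and all real x. -/

import Mathlib

/-!
Write `a k = √(2(k+1)) P (k+1) x P k x`, so that `(P (k+1) ^ 2)' = 2 a k` and `g n' = 2 ∑_{k<n} a k`.
Multiplying the three-term recurrence by `2 P (k+1) x` gives `a (k+1) + a k = 2x P (k+1) x ^ 2`,
and `a 0 = 2x`. Summing this alternating relation gives `g n' = 4x ∑_{j<n, j ≢ n (2)} P j x ^ 2`,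
and the last sum lies between `0` and `g n x`.
-/

open Finset

theorem sum_range_add_two_filter_odd {M : Type*} [AddCommMonoid M] (b : ℕ → M) (n : ℕ) :
    ∑ j ∈ range (n + 2) with Odd (n + 2 + j), b j
      = ∑ j ∈ range n with Odd (n + j), b j + b (n + 1) := by
  have hparity : ∀ j, Odd (n + 2 + j) ↔ Odd (n + j) := fun j => by
    rw [show n + 2 + j = n + j + 1 + 1 by ring, Nat.odd_add_one, Nat.odd_add_one, not_not]
  have hn : ¬Odd (n + n) := Nat.not_odd_iff_even.2 ⟨n, rfl⟩
  have hn1 : Odd (n + (n + 1)) := by rw [← add_assoc]; exact Even.add_one ⟨n, rfl⟩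
  simp only [sum_filter, sum_range_succ, hparity, if_neg hn, if_pos hn1, add_zero]

theorem sum_range_eq_sum_filter_odd {M : Type*} [AddCommMonoid M] {a b : ℕ → M}
    (h0 : a 0 = b 0) (hsucc : ∀ k, a (k + 1) + a k = b (k + 1)) (n : ℕ) :
    ∑ k ∈ range n, a k = ∑ j ∈ range n with Odd (n + j), b j := by
  induction n using Nat.twoStepInduction with
  | zero => simp
  | one => simp [sum_filter, h0]
  | more n ih _ =>
    rw [sum_range_add_two_filter_odd, ← ih, sum_range_succ, sum_range_succ, add_assoc,
      add_comm (a n), hsucc]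

theorem sqrt_two_mul_eq_two_mul_sqrt_div_two (m : ℝ) : √(2 * m) = 2 * √(m / 2) := by
  rw [show 2 * m = 2 ^ 2 * (m / 2) by ring, Real.sqrt_mul (by norm_num),
    Real.sqrt_sq (by norm_num)]

noncomputable def hermiteCross (P : ℕ → ℝ → ℝ) (x : ℝ) (k : ℕ) : ℝ :=
  √(2 * ((k : ℝ) + 1)) * P (k + 1) x * P k x

variable {P : ℕ → ℝ → ℝ}

theorem hermiteCross_zero (hP0 : ∀ x, P 0 x = 1) (hP1 : ∀ x, P 1 x = √2 * x) (x : ℝ) :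
    hermiteCross P x 0 = 2 * x * P 0 x ^ 2 := by
  norm_num [hermiteCross, hP0, hP1, ← mul_assoc]

theorem hermiteCross_succ_add
    (hPrec : ∀ k : ℕ, ∀ x, √((k + 2) / 2) * P (k + 2) x
      = x * P (k + 1) x - √((k + 1) / 2) * P k x) (x : ℝ) (k : ℕ) :
    hermiteCross P x (k + 1) + hermiteCross P x k = 2 * x * P (k + 1) x ^ 2 := by
  rw [hermiteCross, hermiteCross, show ((k + 1 : ℕ) : ℝ) + 1 = k + 2 by push_cast; ring,
    sqrt_two_mul_eq_two_mul_sqrt_div_two, sqrt_two_mul_eq_two_mul_sqrt_div_two]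
  linear_combination (2 * P (k + 1) x) * hPrec k x

theorem hasDerivAt_sum_range_sq (hP0 : ∀ x, P 0 x = 1)
    (hPderiv : ∀ k : ℕ, ∀ x, HasDerivAt (P (k + 1)) (√(2 * (k + 1)) * P k x) x) (n : ℕ) (x : ℝ) :
    HasDerivAt (fun y => ∑ k ∈ range (n + 1), P k y ^ 2)
      (2 * ∑ k ∈ range n, hermiteCross P x k) x := by
  simp only [sum_range_succ', hP0, one_pow]
  refine ((HasDerivAt.fun_sum fun k _ => (hPderiv k x).pow 2).add_const 1).congr_deriv ?_
  rw [mul_sum]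
  refine sum_congr rfl fun k _ => ?_
  rw [hermiteCross]
  push_cast
  ring

/-- For the normalized Hermite polynomials, the derivative of
`g n (x) = ∑_{k=0}^{n} P k (x) ²` satisfies `|g n '(x)| ≤ 4 |x| g n (x)`. -/
theorem stmt_15 (P : ℕ → ℝ → ℝ)
    (hP0 : ∀ x, P 0 x = 1) (hP1 : ∀ x, P 1 x = Real.sqrt 2 * x)
    (hPrec : ∀ k : ℕ, ∀ x, Real.sqrt ((k + 2) / 2) * P (k + 2) x
      = x * P (k + 1) x - Real.sqrt ((k + 1) / 2) * P k x)
    (hPderiv : ∀ k : ℕ, ∀ x, HasDerivAt (P (k + 1)) (Real.sqrt (2 * (k + 1)) * P k x) x) :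
    ∀ n : ℕ, 1 ≤ n → ∀ x : ℝ,
      |deriv (fun y => ∑ k ∈ Finset.range (n + 1), P k y ^ 2) x|
        ≤ 4 * |x| * ∑ k ∈ Finset.range (n + 1), P k x ^ 2 := by
  intro n _ x
  have hcross : ∑ k ∈ range n, hermiteCross P x k
      = ∑ j ∈ range n with Odd (n + j), 2 * x * P j x ^ 2 :=
    sum_range_eq_sum_filter_odd (hermiteCross_zero hP0 hP1 x) (hermiteCross_succ_add hPrec x) n
  rw [(hasDerivAt_sum_range_sq hP0 hPderiv n x).deriv, hcross, ← mul_sum]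
  set S := ∑ j ∈ range n with Odd (n + j), P j x ^ 2
  have hS_nonneg : 0 ≤ S := sum_nonneg fun j _ => sq_nonneg _
  have hS_le : S ≤ ∑ k ∈ range (n + 1), P k x ^ 2 :=
    sum_le_sum_of_subset_of_nonneg ((filter_subset _ _).trans (range_subset_range.2 n.le_succ))
      fun j _ _ => sq_nonneg _
  calc |2 * (2 * x * S)| = 4 * |x| * S := by
        rw [abs_mul, abs_mul, abs_mul, abs_two, abs_of_nonneg hS_nonneg]; ring
    _ ≤ 4 * |x| * ∑ k ∈ range (n + 1), P k x ^ 2 := by gcongr
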